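/- arXiv:2009.04773 — 4 statements merged into one kernel-verified Lean document; each statement's English description precedes it below -/
import Mathlib

section
/- Let Δ be a pure simplicial complex of dimension d ≥ 2 on vertex set V such that every squarefree monomial of degree d+2 in the variables indexed by V is divisible by some facet monomial of Δ (i.e., the generating set of the facet ideal is upper perfect). Then Δ is connected. -/
/-!
Two facets that meet are adjacent. If `F` and `F'` are disjoint, take `d` vertices of `F` and
two of `F'`: upper perfection gives a facet `G` inside these `d + 2` vertices. Having `d + 1`
vertices, `G` fits neither in the `d` chosen from `F` nor, as `d ≥ 2`, in the two chosen from
`F'`, so `G` meets both and `F, G, F'` is a chain.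
-/

open Finset

theorem Finset.inter_nonempty_of_subset_union_of_card_lt {α : Type*} [DecidableEq α]
    {s t u : Finset α} (hu : u ⊆ s ∪ t) (hs : #s < #u) : (u ∩ t).Nonempty := by
  by_contra hut
  have hsub : u ⊆ s := Disjoint.left_le_of_le_sup_right hu
    (disjoint_iff_inter_eq_empty.2 (not_nonempty_iff_eq_empty.1 hut))
  exact (card_le_card hsub).not_gt hs

theorem exists_mem_inter_nonempty_of_disjoint {V : Type*} [DecidableEq V] {d : ℕ} (hd : 2 ≤ d)
    {facets : Finset (Finset V)} (hpure : ∀ F ∈ facets, #F = d + 1)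
    (hup : ∀ S : Finset V, #S = d + 2 → ∃ F ∈ facets, F ⊆ S)
    {F F' : Finset V} (hF : F ∈ facets) (hF' : F' ∈ facets) (hdisj : Disjoint F F') :
    ∃ G ∈ facets, (F ∩ G).Nonempty ∧ (G ∩ F').Nonempty := by
  obtain ⟨A, hAF, hA⟩ := exists_subset_card_eq (s := F) (n := d) (by rw [hpure F hF]; omega)
  obtain ⟨B, hBF', hB⟩ := exists_subset_card_eq (s := F') (n := 2) (by rw [hpure F' hF']; omega)
  obtain ⟨G, hG, hGAB⟩ := hup (A ∪ B)
    (by rw [card_union_of_disjoint (hdisj.mono hAF hBF'), hA, hB])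
  have hGA : (G ∩ A).Nonempty := inter_nonempty_of_subset_union_of_card_lt
    (union_comm A B ▸ hGAB) (by rw [hB, hpure G hG]; omega)
  have hGB : (G ∩ B).Nonempty :=
    inter_nonempty_of_subset_union_of_card_lt hGAB (by rw [hA, hpure G hG]; omega)
  refine ⟨G, hG, ?_, hGB.mono (inter_subset_inter_left hBF')⟩
  rw [inter_comm]
  exact hGA.mono (inter_subset_inter_left hAF)

theorem stmt_3_general {V : Type} [DecidableEq V] (d : ℕ) (hd : 2 ≤ d)
    (facets : Finset (Finset V))
    (hpure : ∀ F ∈ facets, F.card = d + 1)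
    (hup : ∀ S : Finset V, S.card = d + 2 → ∃ F ∈ facets, F ⊆ S) :
    ∀ F ∈ facets, ∀ F' ∈ facets,
      Relation.ReflTransGen
        (fun A B => A ∈ facets ∧ B ∈ facets ∧ (A ∩ B).Nonempty) F F' := by
  intro F hF F' hF'
  by_cases hmeet : (F ∩ F').Nonempty
  · exact .single ⟨hF, hF', hmeet⟩
  · obtain ⟨G, hG, hFG, hGF'⟩ := exists_mem_inter_nonempty_of_disjoint hd hpure hup hF hF'
      (disjoint_iff_inter_eq_empty.2 (not_nonempty_iff_eq_empty.1 hmeet))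
    exact .head ⟨hF, hG, hFG⟩ (.single ⟨hG, hF', hGF'⟩)

/-- Let `Δ` be a pure simplicial complex of dimension `d ≥ 2` (given by its
set of facets, each of cardinality `d + 1`) on a vertex set `V` such that every subset
`S ⊆ V` with `|S| = d + 2` contains some facet (upper perfection of the generating set of
the facet ideal). Then `Δ` is connected: any two facets are linked by a chain of facets
with consecutive nonempty intersections. -/
theorem stmt_3 {V : Type} [DecidableEq V] (d : ℕ) (hd : 2 ≤ d)
    (facets : Finset (Finset V)) (hne : facets.Nonempty)
    (hpure : ∀ F ∈ facets, F.card = d + 1)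
    (hup : ∀ S : Finset V, S.card = d + 2 → ∃ F ∈ facets, F ⊆ S) :
    ∀ F ∈ facets, ∀ F' ∈ facets,
      Relation.ReflTransGen
        (fun A B => A ∈ facets ∧ B ∈ facets ∧ (A ∩ B).Nonempty) F F' :=
  stmt_3_general d hd facets hpure hup
end

section
/- Let k ≥ 1 and b = 2b' with |b| < 2k (so b' < k). Let G be a graph on 4k vertices given by two complete graphs G_1, G_2 on disjoint vertex sets of size 2k each, together with k − b' cross edges. Then the complement of G is connected. -/
/-- Let `k ≥ 1` and `b = 2b'` with `|b| < 2k`. Let `G` be the graph on `4k`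
vertices given by two complete graphs on disjoint vertex sets of size `2k` (the two sides
of `Fin (2k) ⊕ Fin (2k)`), together with exactly `k - b'` cross edges. Then the complement
of `G` is connected. -/
theorem stmt_10 (k : ℕ) (hk : 1 ≤ k) (b b' : ℤ) (hb : b = 2 * b')
    (habs : |b| < 2 * (k : ℤ))
    (G : SimpleGraph (Fin (2 * k) ⊕ Fin (2 * k))) [DecidableRel G.Adj]
    (hin : ∀ u v : Fin (2 * k) ⊕ Fin (2 * k),
      u.isLeft = v.isLeft → (G.Adj u v ↔ u ≠ v))
    (hcross : ((Finset.univ.filter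
        (fun p : Fin (2 * k) × Fin (2 * k) => G.Adj (Sum.inl p.1) (Sum.inr p.2))).card : ℤ)
      = (k : ℤ) - b') :
    Gᶜ.Connected := by
  set M : Finset (Fin (2 * k) × Fin (2 * k)) :=
    Finset.univ.filter (fun p => G.Adj (Sum.inl p.1) (Sum.inr p.2)) with hM
  -- |b'| < k
  have hb' : b' < k ∧ -b' < k := by
    rw [abs_lt] at habs; omega
  have hMcard : M.card < 2 * k := by
    have : (M.card : ℤ) < 2 * k := by rw [hcross]; omega
    exact_mod_cast this
  -- per-left-vertex missing sets
  set Mu : Fin (2 * k) → Finset (Fin (2 * k)) :=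
    fun u => Finset.univ.filter (fun v => G.Adj (Sum.inl u) (Sum.inr v)) with hMu
  have himg : ∀ u : Fin (2 * k), (Mu u).image (fun v => (u, v)) = M.filter (fun p => p.1 = u) := by
    intro u
    ext p
    simp only [Finset.mem_image, Finset.mem_filter, Finset.mem_univ, true_and, hMu, hM]
    constructor
    · rintro ⟨v, hv, rfl⟩; exact ⟨hv, rfl⟩
    · rintro ⟨h1, h2⟩; exact ⟨p.2, h2 ▸ h1, by rw [← h2]⟩
  have hcardMu : ∀ u, (Mu u).card = (M.filter (fun p => p.1 = u)).card := by
    intro u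
    rw [← himg u, Finset.card_image_of_injective _ (fun a b h => by simpa using h)]
  have hsum2 : ∀ u u' : Fin (2 * k), u ≠ u' → (Mu u).card + (Mu u').card ≤ M.card := by
    intro u u' huu
    rw [hcardMu, hcardMu, ← Finset.card_union_of_disjoint]
    · exact Finset.card_le_card (Finset.union_subset (Finset.filter_subset _ _) (Finset.filter_subset _ _))
    · apply Finset.disjoint_filter_filter'
      exact Set.disjoint_left.mpr (fun p h1 h2 => huu (h1 ▸ h2.symm ▸ rfl))
  have hcommon : ∀ u u' : Fin (2 * k), u ≠ u' →
      ∃ w, ¬ G.Adj (Sum.inl u) (Sum.inr w) ∧ ¬ G.Adj (Sum.inl u') (Sum.inr w) := by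
    intro u u' huu
    have hs : (Mu u)ᶜ.card = 2 * k - (Mu u).card := by
      simp [Finset.card_compl]
    have ht : (Mu u')ᶜ.card = 2 * k - (Mu u').card := by
      simp [Finset.card_compl]
    have hle1 : (Mu u).card ≤ 2 * k := by simpa using Finset.card_le_univ (Mu u)
    have hle2 : (Mu u').card ≤ 2 * k := by simpa using Finset.card_le_univ (Mu u')
    have hinter : ((Mu u)ᶜ ∩ (Mu u')ᶜ).Nonempty := by
      rw [Finset.nonempty_iff_ne_empty]
      intro hemp
      have hcui := Finset.card_union_add_card_inter (Mu u)ᶜ (Mu u')ᶜ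
      rw [hemp, Finset.card_empty] at hcui
      have hu2 : ((Mu u)ᶜ ∪ (Mu u')ᶜ).card ≤ 2 * k := by
        simpa using Finset.card_le_univ ((Mu u)ᶜ ∪ (Mu u')ᶜ)
      have h2 := hsum2 u u' huu
      omega
    obtain ⟨w, hw⟩ := hinter
    rw [Finset.mem_inter, Finset.mem_compl, Finset.mem_compl] at hw
    simp only [hMu, Finset.mem_filter, Finset.mem_univ, true_and] at hw
    exact ⟨w, hw.1, hw.2⟩
  -- every right vertex has a complement-neighbor on the left
  have hright : ∀ v : Fin (2 * k), ∃ u, ¬ G.Adj (Sum.inl u) (Sum.inr v) := by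
    intro v
    by_contra h
    push_neg at h
    have : (Finset.univ.filter (fun u : Fin (2 * k) => G.Adj (Sum.inl u) (Sum.inr v))).card
        ≤ M.card := by
      rw [show Finset.univ.filter (fun u : Fin (2 * k) => G.Adj (Sum.inl u) (Sum.inr v))
          = Finset.univ from Finset.filter_true_of_mem (fun u _ => h u)] at *
      calc (Finset.univ : Finset (Fin (2 * k))).card
          = ((Finset.univ.image (fun u : Fin (2 * k) => (u, v)))).card := by
            rw [Finset.card_image_of_injective _ (fun a b h => by simpa using h)]
        _ ≤ M.card := by
            apply Finset.card_le_card
            intro p hp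
            simp only [Finset.mem_image, Finset.mem_univ, true_and] at hp
            obtain ⟨u, rfl⟩ := hp
            simp only [hM, Finset.mem_filter, Finset.mem_univ, true_and]
            exact h u
    simp only [Finset.filter_true_of_mem (fun u _ => h u), Finset.card_univ,
      Fintype.card_fin] at this
    omega
  -- complement adjacency across the bipartition
  have hcadj : ∀ (u v : Fin (2 * k)), ¬ G.Adj (Sum.inl u) (Sum.inr v) →
      Gᶜ.Adj (Sum.inl u) (Sum.inr v) := by
    intro u v h
    exact ⟨by simp, h⟩
  have hll : ∀ u u' : Fin (2 * k), Gᶜ.Reachable (Sum.inl u) (Sum.inl u') := by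
    intro u u'
    rcases eq_or_ne u u' with rfl | h
    · rfl
    · obtain ⟨w, hw1, hw2⟩ := hcommon u u' h
      exact ((hcadj u w hw1).reachable).trans ((hcadj u' w hw2).reachable.symm)
  rw [SimpleGraph.connected_iff]
  refine ⟨?_, ⟨Sum.inl ⟨0, by omega⟩⟩⟩
  intro x y
  match x, y with
  | Sum.inl u, Sum.inl u' => exact hll u u'
  | Sum.inl u, Sum.inr v =>
      obtain ⟨l, hl⟩ := hright v
      exact (hll u l).trans (hcadj l v hl).reachable
  | Sum.inr v, Sum.inl u =>
      obtain ⟨l, hl⟩ := hright v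
      exact ((hll u l).trans (hcadj l v hl).reachable).symm
  | Sum.inr v, Sum.inr v' =>
      obtain ⟨l, hl⟩ := hright v
      obtain ⟨l', hl'⟩ := hright v'
      exact ((hcadj l v hl).reachable.symm.trans (hll l l')).trans (hcadj l' v' hl').reachable
end

section
/- For integers k ≥ 1, 0 ≤ x ≤ k, 0 ≤ y ≤ 2k+1 with (x,y) ≠ (0,0), and integer b with |b| < 2k+1: xy + (2k+1−x)(2k+1−y) < 4k² + 3k + 1/2 + b/2. -/
/-- For integers `k ≥ 1`, `0 ≤ x ≤ k`, `0 ≤ y ≤ 2k + 1` with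
`(x,y) ≠ (0,0)`, and an integer `b` with `|b| < 2k + 1`:
`xy + (2k+1-x)(2k+1-y) < 4k² + 3k + 1/2 + b/2` (as rationals). -/
theorem stmt_12 (k x y b : ℤ) (hk : 1 ≤ k) (hx0 : 0 ≤ x) (hxk : x ≤ k)
    (hy0 : 0 ≤ y) (hy : y ≤ 2 * k + 1) (hxy : ¬(x = 0 ∧ y = 0))
    (hb : |b| < 2 * k + 1) :
    (x : ℚ) * y + (2 * (k : ℚ) + 1 - x) * (2 * (k : ℚ) + 1 - y)
      < 4 * (k : ℚ) ^ 2 + 3 * (k : ℚ) + 1 / 2 + (b : ℚ) / 2 := by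
  have hb' : -(2 * k + 1) < b := (abs_lt.mp hb).1
  have key : x * y + (2 * k + 1 - x) * (2 * k + 1 - y) ≤ 4 * k ^ 2 + 2 * k := by
    rcases eq_or_lt_of_le hx0 with hx | hx
    · have hy1 : 1 ≤ y := by
        rcases eq_or_lt_of_le hy0 with hy' | hy'
        · exact absurd ⟨hx.symm, hy'.symm⟩ hxy
        · omega
      nlinarith
    · rcases le_or_gt y k with hyk | hyk
      · nlinarith
      · nlinarith
  have keyq : (x : ℚ) * y + (2 * (k : ℚ) + 1 - x) * (2 * (k : ℚ) + 1 - y)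
      ≤ 4 * (k : ℚ) ^ 2 + 2 * (k : ℚ) := by exact_mod_cast key
  have hbq : (-(2 * (k : ℚ) + 1)) < b := by exact_mod_cast hb'
  linarith
end

section
/- For n ≥ 4 and t ≥ 2, the minimal cardinality N(n,2) of an upper-and-lower perfect set of squarefree degree-2 monomials in n variables satisfies: if n = 2t then every graph G on n vertices with no isolated vertices and triangle-free complement has at least t² − t edges; if n = 2t+1, at least t² edges. -/
/-!
By Mantel's theorem the triangle-free complement of `G` has at most `⌊n²/4⌋` edges, so `G` has
at least `C(n,2) - ⌊n²/4⌋` edges, which is `t² - t` for `n = 2t` and `t²` for `n = 2t + 1`.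
-/

open Finset

namespace SimpleGraph

variable {V : Type*} [Fintype V]

theorem CliqueFree.card_edgeFinset_le_sq_div_four {H : SimpleGraph V} [DecidableRel H.Adj]
    (hH : H.CliqueFree 3) : #H.edgeFinset ≤ Fintype.card V ^ 2 / 4 := by
  convert hH.card_edgeFinset_le (r := 2) using 1
  rcases Nat.even_or_odd' (Fintype.card V) with ⟨k, hk | hk⟩ <;> simp only [hk]
  · simp [Nat.mul_mod_right]
  · simp [Nat.add_mod]
    ring_nf
    omega

variable [DecidableEq V] (G : SimpleGraph V) [DecidableRel G.Adj]

theorem card_edgeFinset_add_card_edgeFinset_compl :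
    #G.edgeFinset + #Gᶜ.edgeFinset = (Fintype.card V).choose 2 := by
  rw [← card_union_of_disjoint (disjoint_edgeFinset.2 disjoint_compl_right), ← edgeFinset_sup,
    ← card_edgeFinset_top_eq_card_choose_two]
  congr!
  exact sup_compl_eq_top

theorem choose_two_sub_sq_div_four_le_card_edgeFinset (hG : Gᶜ.CliqueFree 3) :
    (Fintype.card V).choose 2 - Fintype.card V ^ 2 / 4 ≤ #G.edgeFinset := by
  have := G.card_edgeFinset_add_card_edgeFinset_compl
  have := hG.card_edgeFinset_le_sq_div_four
  omega

end SimpleGraph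

theorem stmt_17_general (t : ℕ) :
    (∀ (V : Type) [Fintype V] [DecidableEq V] (G : SimpleGraph V) [DecidableRel G.Adj],
      Fintype.card V = 2 * t → (∀ v : V, ∃ w : V, G.Adj v w) → Gᶜ.CliqueFree 3 →
        t ^ 2 - t ≤ G.edgeFinset.card) ∧
    (∀ (V : Type) [Fintype V] [DecidableEq V] (G : SimpleGraph V) [DecidableRel G.Adj],
      Fintype.card V = 2 * t + 1 → (∀ v : V, ∃ w : V, G.Adj v w) → Gᶜ.CliqueFree 3 →
        t ^ 2 ≤ G.edgeFinset.card) := by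
  have even_count : (2 * t).choose 2 - (2 * t) ^ 2 / 4 = t ^ 2 - t := by
    rcases t with _ | s
    · rfl
    rw [Nat.choose_two_right, show 2 * (s + 1) - 1 = 2 * s + 1 by omega]
    ring_nf
    omega
  have odd_count : (2 * t + 1).choose 2 - (2 * t + 1) ^ 2 / 4 = t ^ 2 := by
    rw [Nat.choose_two_right, Nat.add_sub_cancel]
    ring_nf
    omega
  constructor
  · intro V _ _ G _ hcard _ hG
    rw [← even_count, ← hcard]
    exact G.choose_two_sub_sq_div_four_le_card_edgeFinset hG
  · intro V _ _ G _ hcard _ hG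
    rw [← odd_count, ← hcard]
    exact G.choose_two_sub_sq_div_four_le_card_edgeFinset hG

/-- For `n ≥ 4` and `t ≥ 2` (lower bound for the perfect number `N(n,2)`):
every graph `G` on `n` vertices with no isolated vertices and triangle-free complement
(i.e. whose edge set is a lower and upper perfect set of squarefree degree-2 monomials)
has at least `t² - t` edges if `n = 2t`, and at least `t²` edges if `n = 2t + 1`. -/
theorem stmt_17 (t : ℕ) (ht : 2 ≤ t) :
    (∀ (V : Type) [Fintype V] [DecidableEq V] (G : SimpleGraph V) [DecidableRel G.Adj],
      Fintype.card V = 2 * t → (∀ v : V, ∃ w : V, G.Adj v w) → Gᶜ.CliqueFree 3 →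
        t ^ 2 - t ≤ G.edgeFinset.card) ∧
    (∀ (V : Type) [Fintype V] [DecidableEq V] (G : SimpleGraph V) [DecidableRel G.Adj],
      Fintype.card V = 2 * t + 1 → (∀ v : V, ∃ w : V, G.Adj v w) → Gᶜ.CliqueFree 3 →
        t ^ 2 ≤ G.edgeFinset.card) :=
  stmt_17_general t
end
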